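/- Let n ≥ 3 and let Γ(x,y) = c(n)|x−y|^{2−n}. Define the remainder R_{y,d}(x) = Γ(x,y) − Σ_{k=0}^d Γ_k(y) P_{y,k}(x), where Γ_k(y)P_{y,k}(x) is the degree-k part of the spherical harmonic expansion of Γ(·,y) at 0. Then for all |x| ≤ |y|/2, |R_{y,d}(x)| ≤ c(n) 2^{d+1} |x|^{d+1} |y|^{1−n−d}. -/

import Mathlib

open MeasureTheory Metric


lemma stmt10_uniq (d : ℕ → ℝ) (A r ε : ℝ) (hr : 0 < r) (hε : 0 < ε)
    (hd : ∀ k, |d k| ≤ A * r ^ k)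
    (h : ∀ t : ℝ, 0 < t → t < ε → HasSum (fun k => d k * t ^ k) 0) :
    ∀ k, d k = 0 := by
  have hA : 0 ≤ A := by
    have := (abs_nonneg (d 0)).trans (hd 0); simpa using this
  intro m
  induction m using Nat.strong_induction_on with
  | _ m ih =>
    -- for small t, |d m| ≤ 2*A*r^(m+1)*t
    have key : ∀ t : ℝ, 0 < t → t < ε → t < 1 / (2 * r) → |d m| ≤ 2 * A * r ^ (m + 1) * t := by
      intro t ht htε htr
      have hrt : r * t < 1 / 2 := by
        have := (lt_div_iff₀ (by positivity : (0:ℝ) < 2 * r)).mp htr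
        nlinarith
      have hrt1 : r * t < 1 := by linarith
      have hrtpos : 0 ≤ r * t := by positivity
      have hs := h t ht htε
      -- drop the first m terms (they vanish)
      have hsum0 : ∑ i ∈ Finset.range m, d i * t ^ i = 0 := by
        apply Finset.sum_eq_zero
        intro i hi
        rw [ih i (Finset.mem_range.mp hi), zero_mul]
      have hs2 : HasSum (fun k => d (k + m) * t ^ (k + m)) 0 := by
        have := (hasSum_nat_add_iff' (f := fun k => d k * t ^ k) m).mpr hs
        simpa [hsum0] using this
      -- divide by t^m
      have htm : (t : ℝ) ^ m ≠ 0 := pow_ne_zero _ (ne_of_gt ht)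
      have hs3 : HasSum (fun k => d (k + m) * t ^ k) 0 := by
        have := hs2.mul_right ((t ^ m)⁻¹)
        simpa [pow_add, mul_assoc, mul_inv_cancel_right₀ htm] using this
      -- extract first term
      have hs4 : HasSum (fun k => d (k + 1 + m) * t ^ (k + 1)) (0 - ∑ i ∈ Finset.range 1, d (i + m) * t ^ i) := by
        have := (hasSum_nat_add_iff' (f := fun k => d (k + m) * t ^ k) 1).mpr hs3
        convert this using 2 with k
      have hdm : d m = -∑' k, d (k + 1 + m) * t ^ (k + 1) := by
        have := hs4.tsum_eq
        simp only [Finset.sum_range_one, pow_zero, mul_one, zero_sub, zero_add] at this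
        linarith [this]
      -- bound the tail
      have hgeo : HasSum (fun k : ℕ => (A * r ^ (m + 1) * t) * (r * t) ^ k)
          ((A * r ^ (m + 1) * t) * (1 - r * t)⁻¹) :=
        (hasSum_geometric_of_lt_one hrtpos hrt1).mul_left _
      have hbound : ‖∑' k, d (k + 1 + m) * t ^ (k + 1)‖ ≤ (A * r ^ (m + 1) * t) * (1 - r * t)⁻¹ := by
        apply tsum_of_norm_bounded hgeo
        intro k
        rw [Real.norm_eq_abs, abs_mul, abs_pow, abs_of_pos ht]
        calc |d (k + 1 + m)| * t ^ (k + 1) ≤ (A * r ^ (k + 1 + m)) * t ^ (k + 1) := by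
              apply mul_le_mul_of_nonneg_right (hd _) (by positivity)
          _ = (A * r ^ (m + 1) * t) * (r * t) ^ k := by ring
      have hinv : (1 - r * t)⁻¹ ≤ 2 := by
        rw [inv_le_comm₀ (by linarith) (by norm_num)]
        linarith
      rw [hdm, abs_neg, ← Real.norm_eq_abs]
      calc ‖∑' k, d (k + 1 + m) * t ^ (k + 1)‖ ≤ (A * r ^ (m + 1) * t) * (1 - r * t)⁻¹ := hbound
        _ ≤ (A * r ^ (m + 1) * t) * 2 := by
            apply mul_le_mul_of_nonneg_left hinv (by positivity)
        _ = 2 * A * r ^ (m + 1) * t := by ring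
    -- conclude d m = 0
    have : |d m| ≤ 0 := by
      by_contra hcon
      push_neg at hcon
      set B := 2 * A * r ^ (m + 1) with hB
      have hBpos : 0 ≤ B := by positivity
      obtain ⟨t, ht1, ht2⟩ := exists_between (lt_min (lt_min hε (by positivity : (0:ℝ) < 1 / (2*r)))
        (by positivity : (0:ℝ) < |d m| / (B + 1)))
      have htε : t < ε := lt_of_lt_of_le ht2 ((min_le_left _ _).trans (min_le_left _ _))
      have htr : t < 1 / (2 * r) := lt_of_lt_of_le ht2 ((min_le_left _ _).trans (min_le_right _ _))
      have htd : t < |d m| / (B + 1) := lt_of_lt_of_le ht2 (min_le_right _ _)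
      have := key t ht1 htε htr
      have : |d m| ≤ B * t := this
      have h2 : B * t < |d m| := by
        calc B * t ≤ (B + 1) * t := by nlinarith
          _ < (B + 1) * (|d m| / (B + 1)) := by
              apply mul_lt_mul_of_pos_left htd (by linarith)
          _ = |d m| := by field_simp
      linarith
    exact abs_nonpos_iff.mp this




lemma stmt10_cauchy (n : ℕ) (hn : 3 ≤ n) (c a b A r : ℝ) (aa : ℕ → ℝ)
    (hc : 0 < c) (hb : 0 < b) (ha : |a| ≤ b) (hr : 0 < r)
    (hA : ∀ k, |aa k| ≤ A * r ^ k)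
    (hsum : ∀ s : ℝ, 0 < s → s < 2 * b / 3 →
      HasSum (fun k => aa k * s ^ k) (c * (s ^ 2 - 2 * a * s + b ^ 2) ^ (((2:ℝ) - n) / 2)))
    (huniq : ∀ (d : ℕ → ℝ) (A' r' ε : ℝ), 0 < r' → 0 < ε →
      (∀ k, |d k| ≤ A' * r' ^ k) →
      (∀ t : ℝ, 0 < t → t < ε → HasSum (fun k => d k * t ^ k) 0) → ∀ k, d k = 0) :
    ∀ k, |aa k| ≤ (c * (b ^ 2 / 18) ^ (((2:ℝ) - n) / 2)) * ((2 * b / 3)⁻¹) ^ k := by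
  set w : ℝ := ((2:ℝ) - n) / 2 with hw_def
  have hw : w ≤ 0 := by
    have : (3:ℝ) ≤ n := by exact_mod_cast hn
    rw [hw_def]; linarith
  set q : ℂ → ℂ := fun z => z ^ 2 - 2 * (a:ℂ) * z + (b:ℂ) ^ 2 with hq_def
  set F : ℂ → ℂ := fun z => (c:ℂ) * q z ^ (w : ℂ) with hF_def
  set M : ℝ := c * (b ^ 2 / 18) ^ w with hM_def
  have hM0 : 0 < M := by
    apply mul_pos hc
    apply Real.rpow_pos_of_pos
    positivity
  -- real-part lower bound for q on the closed ball of radius 2b/3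
  have hre : ∀ z : ℂ, ‖z‖ ≤ 2 * b / 3 → b ^ 2 / 18 ≤ (q z).re := by
    intro z hz
    have h1 : z.re ^ 2 + z.im ^ 2 ≤ (2 * b / 3) ^ 2 := by
      have e : z.re ^ 2 + z.im ^ 2 = ‖z‖ ^ 2 := by
        rw [Complex.sq_norm, Complex.normSq_apply]; ring
      rw [e]
      exact pow_le_pow_left₀ (norm_nonneg z) hz 2
    have h2 : (q z).re = z.re ^ 2 - z.im ^ 2 - 2 * a * z.re + b ^ 2 := by
      simp [hq_def, Complex.mul_re, Complex.add_re, Complex.sub_re, pow_two]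
    have ha2 : a ^ 2 ≤ b ^ 2 := by
      have := abs_le.mp ha
      nlinarith
    rw [h2]
    nlinarith [sq_nonneg (2 * z.re - a)]
  have hqne : ∀ z : ℂ, ‖z‖ ≤ 2 * b / 3 → q z ≠ 0 := by
    intro z hz h0
    have := hre z hz
    rw [h0] at this
    simp at this
    nlinarith
  have hslit : ∀ z : ℂ, ‖z‖ ≤ 2 * b / 3 → q z ∈ Complex.slitPlane := by
    intro z hz
    left
    have := hre z hz
    nlinarith
  have hdiff : ∀ z : ℂ, ‖z‖ ≤ 2 * b / 3 → DifferentiableAt ℂ F z := by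
    intro z hz
    apply DifferentiableAt.const_mul
    apply DifferentiableAt.cpow
    · apply DifferentiableAt.add
      apply DifferentiableAt.sub
      · exact differentiableAt_pow 2
      · exact (differentiableAt_id.const_mul _)
      · exact differentiableAt_const _
    · exact differentiableAt_const _
    · exact hslit z hz
  have hFb : ∀ z : ℂ, ‖z‖ ≤ 2 * b / 3 → ‖F z‖ ≤ M := by
    intro z hz
    have hq0 := hqne z hz
    rw [hF_def]
    simp only [norm_mul, Complex.norm_real, Real.norm_eq_abs, abs_of_pos hc]
    rw [Complex.norm_cpow_of_ne_zero hq0]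
    simp only [Complex.ofReal_re, Complex.ofReal_im, mul_zero, Real.exp_zero, div_one]
    rw [hM_def]
    apply mul_le_mul_of_nonneg_left _ hc.le
    apply Real.rpow_le_rpow_of_nonpos (by positivity) _ hw
    exact le_trans (hre z hz) ((Complex.re_le_norm _))
  -- the power series
  set R : NNReal := ⟨2 * b / 3, by positivity⟩ with hR_def
  have hRpos : 0 < R := by
    rw [← NNReal.coe_lt_coe]
    show (0:ℝ) < 2 * b / 3
    positivity
  have hRcoe : (R : ℝ) = 2 * b / 3 := rfl
  have hFd : DifferentiableOn ℂ F (closedBall (0:ℂ) R) := by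
    intro z hz
    apply (hdiff z _).differentiableWithinAt
    rw [mem_closedBall, dist_zero_right] at hz
    exact hz
  have hp := hFd.hasFPowerSeriesOnBall hRpos
  set p := cauchyPowerSeries F 0 R with hp_def
  -- coefficient bounds
  have hcoef : ∀ k, ‖p.coeff k‖ ≤ M * ((2 * b / 3)⁻¹) ^ k := by
    intro k
    have h1 : ‖p.coeff k‖ ≤ ‖p k‖ := by
      calc ‖p.coeff k‖ = ‖p k fun _ => 1‖ := rfl
        _ ≤ ‖p k‖ * ∏ _i : Fin k, ‖(1:ℂ)‖ := (p k).le_opNorm _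
        _ = ‖p k‖ := by simp
    have h2 := norm_cauchyPowerSeries_le F 0 R k
    have hInt : ∫ θ : ℝ in (0)..2 * Real.pi, ‖F (circleMap 0 R θ)‖ ≤ 2 * Real.pi * M := by
      have hcont : Continuous fun θ : ℝ => ‖F (circleMap 0 R θ)‖ := by
        apply Continuous.norm
        apply continuous_iff_continuousAt.mpr
        intro θ
        have hcm : ‖circleMap 0 R θ‖ ≤ 2 * b / 3 := by
          rw [norm_circleMap_zero, _root_.abs_of_nonneg R.coe_nonneg]
          exact le_of_eq hRcoe
        exact ((hdiff _ hcm).continuousAt).comp (continuous_circleMap 0 (R:ℝ)).continuousAt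
      calc ∫ θ : ℝ in (0)..2 * Real.pi, ‖F (circleMap 0 R θ)‖
          ≤ ∫ _θ : ℝ in (0)..2 * Real.pi, M := by
            apply intervalIntegral.integral_mono_on Real.two_pi_pos.le
              (hcont.intervalIntegrable _ _) (intervalIntegrable_const)
            intro θ _
            apply hFb
            rw [norm_circleMap_zero, _root_.abs_of_nonneg R.coe_nonneg]
            exact le_of_eq hRcoe
        _ = 2 * Real.pi * M := by
            simp [intervalIntegral.integral_const, smul_eq_mul]
    calc ‖p.coeff k‖ ≤ ‖p k‖ := h1
      _ ≤ ((2 * Real.pi)⁻¹ * ∫ θ : ℝ in (0)..2 * Real.pi, ‖F (circleMap 0 R θ)‖) * |(R:ℝ)|⁻¹ ^ k := h2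
      _ ≤ ((2 * Real.pi)⁻¹ * (2 * Real.pi * M)) * |(R:ℝ)|⁻¹ ^ k := by
          apply mul_le_mul_of_nonneg_right _ (by positivity)
          apply mul_le_mul_of_nonneg_left hInt (by positivity)
      _ = M * ((2 * b / 3)⁻¹) ^ k := by
          rw [_root_.abs_of_nonneg R.coe_nonneg, hRcoe]
          field_simp
  -- values of F on positive reals
  have hFreal : ∀ s : ℝ, 0 ≤ s → s ≤ 2 * b / 3 →
      F s = ((c * (s ^ 2 - 2 * a * s + b ^ 2) ^ w : ℝ) : ℂ) := by
    intro s hs0 hs1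
    have habs : ‖(s : ℂ)‖ ≤ 2 * b / 3 := by
      rw [Complex.norm_real, Real.norm_eq_abs, _root_.abs_of_nonneg hs0]; exact hs1
    have hqs : q (s : ℂ) = ((s ^ 2 - 2 * a * s + b ^ 2 : ℝ) : ℂ) := by
      rw [hq_def]; push_cast; ring
    have hpos : (0:ℝ) ≤ s ^ 2 - 2 * a * s + b ^ 2 := by
      have := hre (s:ℂ) habs
      rw [hqs] at this
      simp only [Complex.ofReal_re] at this
      nlinarith
    rw [hF_def]
    simp only
    rw [hqs, ← Complex.ofReal_cpow hpos]
    push_cast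
    ring
  -- real parts of coefficients sum to the same function
  have hFs : ∀ s : ℝ, 0 < s → s < 2 * b / 3 →
      HasSum (fun k => (p.coeff k).re * s ^ k)
        (c * (s ^ 2 - 2 * a * s + b ^ 2) ^ w) := by
    intro s hs0 hs1
    have hmem : (s : ℂ) ∈ Metric.eball (0:ℂ) R := by
      rw [mem_emetric_ball_zero_iff]
      rw [← ofReal_norm_eq_enorm, Complex.norm_real, Real.norm_eq_abs, abs_of_pos hs0,
        ← ENNReal.ofReal_coe_nnreal, ENNReal.ofReal_lt_ofReal_iff (by positivity), hRcoe]
      exact hs1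
    have h1 := hp.hasSum hmem
    simp only [FormalMultilinearSeries.apply_eq_pow_smul_coeff, zero_add] at h1
    have h2 := (Complex.reCLM : ℂ →L[ℝ] ℝ).hasSum h1
    have h3 : ∀ k : ℕ, Complex.reCLM ((s:ℂ) ^ k • p.coeff k) = (p.coeff k).re * s ^ k := by
      intro k
      simp only [Complex.reCLM_apply, smul_eq_mul, ← Complex.ofReal_pow,
        Complex.re_ofReal_mul]
      ring
    have h4 : Complex.reCLM (F s) = c * (s ^ 2 - 2 * a * s + b ^ 2) ^ w := by
      rw [hFreal s hs0.le hs1.le]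
      simp
    rw [← h4]
    exact h2.congr_fun fun k => (h3 k).symm
  -- A ≥ 0
  have hA0 : 0 ≤ A := by
    have := (abs_nonneg (aa 0)).trans (hA 0)
    simpa using this
  -- apply uniqueness to the difference
  have hzero : ∀ k, aa k - (p.coeff k).re = 0 := by
    apply huniq _ (A + M) (r + (2 * b / 3)⁻¹) (2 * b / 3) (by positivity) (by positivity)
    · intro k
      have e1 : |aa k| ≤ A * (r + (2 * b / 3)⁻¹) ^ k :=
        le_trans (hA k) (mul_le_mul_of_nonneg_left
          (pow_le_pow_left₀ hr.le (le_add_of_nonneg_right (by positivity)) k) hA0)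
      have e2 : |(p.coeff k).re| ≤ M * (r + (2 * b / 3)⁻¹) ^ k := by
        refine le_trans (Complex.abs_re_le_norm _) (le_trans (hcoef k) ?_)
        apply mul_le_mul_of_nonneg_left _ hM0.le
        exact pow_le_pow_left₀ (by positivity) (le_add_of_nonneg_left hr.le) k
      calc |aa k - (p.coeff k).re| ≤ |aa k| + |(p.coeff k).re| := abs_sub _ _
        _ ≤ A * (r + (2 * b / 3)⁻¹) ^ k + M * (r + (2 * b / 3)⁻¹) ^ k := add_le_add e1 e2
        _ = (A + M) * (r + (2 * b / 3)⁻¹) ^ k := by ring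
    · intro t ht0 ht1
      have := (hsum t ht0 ht1).sub (hFs t ht0 ht1)
      simpa [sub_mul] using this
  intro k
  have : aa k = (p.coeff k).re := by linarith [hzero k]
  rw [this]
  exact le_trans (Complex.abs_re_le_norm _) (hcoef k)

/-- `P` is a homogeneous harmonic polynomial of degree `d` on `ℝⁿ`. -/
def IsHomHarmPoly {n : ℕ} (d : ℕ) (P : EuclideanSpace ℝ (Fin n) → ℝ) : Prop :=
  ContDiff ℝ (⊤ : ℕ∞) P ∧
  (∀ x, ∑ i : Fin n, fderiv ℝ (fun z => fderiv ℝ P z (EuclideanSpace.single i 1)) x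
      (EuclideanSpace.single i 1) = 0) ∧
  (∀ (c : ℝ) (x), 0 ≤ c → P (c • x) = c ^ d * P x) ∧
  ∃ q : MvPolynomial (Fin n) ℝ, ∀ x,
    P x = MvPolynomial.eval (fun i => (WithLp.equiv 2 (Fin n → ℝ)) x i) q

/-- Remainder estimate for the spherical-harmonic expansion of the fundamental solution:
for `|x| ≤ |y|/2`,
`|R_{y,d}(x)| = |Γ(x,y) − Σ_{k≤d} Γ_k(y)P_{y,k}(x)| ≤ C(n) c 2^{d+1} |x|^{d+1} |y|^{1−n−d}`. -/
theorem stmt10 (n : ℕ) (hn : 3 ≤ n) :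
    ∃ C : ℝ, 0 < C ∧ ∀ (c : ℝ), 0 < c →
    ∀ (y : EuclideanSpace ℝ (Fin n)), y ≠ 0 →
    ∀ (Γ : ℕ → ℝ) (P : ℕ → EuclideanSpace ℝ (Fin n) → ℝ),
      (∀ k, IsHomHarmPoly k (P k)) →
      (∀ k, (⨍ z in sphere (0 : EuclideanSpace ℝ (Fin n)) 1, (P k z) ^ 2
          ∂(μH[(n : ℝ) - 1])) = 1) →
      (∀ x ∈ ball (0 : EuclideanSpace ℝ (Fin n)) ‖y‖,
        c * ‖x - y‖ ^ ((2 : ℝ) - n) = ∑' k, Γ k * P k x) →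
      ∀ (d : ℕ) (x : EuclideanSpace ℝ (Fin n)), ‖x‖ ≤ ‖y‖ / 2 →
        |c * ‖x - y‖ ^ ((2 : ℝ) - n) - ∑ k ∈ Finset.range (d + 1), Γ k * P k x| ≤
          C * c * 2 ^ (d + 1) * ‖x‖ ^ (d + 1) * ‖y‖ ^ ((1 : ℝ) - n - d) := by
  set K : ℝ := (18:ℝ) ^ (((n:ℝ) - 2) / 2) with hK_def
  have hK : 0 < K := Real.rpow_pos_of_pos (by norm_num) _
  refine ⟨4 * K, by positivity, ?_⟩
  intro c hc y hy Γ P hP _hnorm hexp d x hx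
  set w : ℝ := ((2:ℝ) - n) / 2 with hw_def
  set b : ℝ := ‖y‖ with hb_def
  have hb : 0 < b := norm_pos_iff.mpr hy
  have hhom : ∀ (k : ℕ) (s : ℝ) (v : EuclideanSpace ℝ (Fin n)), 0 ≤ s →
      P k (s • v) = s ^ k * P k v := fun k s v hs => (hP k).2.2.1 s v hs
  -- the rpow of the norm equals rpow of the quadratic form
  have hrpow_eq : ∀ v : EuclideanSpace ℝ (Fin n),
      ‖v‖ ^ ((2:ℝ) - n) = ((‖v‖ ^ 2 : ℝ)) ^ w := by
    intro v
    rw [← Real.rpow_natCast ‖v‖ 2, ← Real.rpow_mul (norm_nonneg v)]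
    congr 1
    rw [hw_def]
    push_cast
    ring
  by_cases hx0 : x = 0
  · -- trivial case x = 0
    subst hx0
    have hP0 : ∀ k : ℕ, k ≠ 0 → Γ k * P k (0 : EuclideanSpace ℝ (Fin n)) = 0 := by
      intro k hk
      have : P k (0 : EuclideanSpace ℝ (Fin n)) = 0 := by
        have := hhom k 0 0 le_rfl
        rw [smul_zero] at this
        rw [this, zero_pow hk, zero_mul]
      rw [this, mul_zero]
    have h0mem : (0 : EuclideanSpace ℝ (Fin n)) ∈ ball (0 : EuclideanSpace ℝ (Fin n)) ‖y‖ :=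
      mem_ball_self hb
    have he := hexp 0 h0mem
    have htsum : ∑' k, Γ k * P k (0 : EuclideanSpace ℝ (Fin n)) =
        Γ 0 * P 0 (0 : EuclideanSpace ℝ (Fin n)) := tsum_eq_single 0 hP0
    have hsum_eq : ∑ k ∈ Finset.range (d + 1), Γ k * P k (0 : EuclideanSpace ℝ (Fin n)) =
        Γ 0 * P 0 (0 : EuclideanSpace ℝ (Fin n)) := by
      rw [Finset.sum_eq_single 0]
      · intro k _ hk; exact hP0 k hk
      · intro h; exact absurd (Finset.mem_range.mpr (Nat.succ_pos d)) h
    rw [hsum_eq, he, htsum, sub_self, abs_zero]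
    have : ‖(0 : EuclideanSpace ℝ (Fin n))‖ = 0 := norm_zero
    rw [this]
    rw [zero_pow (Nat.succ_ne_zero d)]
    positivity
  -- main case
  have ht : 0 < ‖x‖ := norm_pos_iff.mpr hx0
  set t : ℝ := ‖x‖ with ht_def
  set e : EuclideanSpace ℝ (Fin n) := ‖x‖⁻¹ • x with he_def
  have he1 : ‖e‖ = 1 := norm_smul_inv_norm hx0
  have hx_eq : x = t • e := by
    rw [he_def, ht_def, smul_smul, mul_inv_cancel₀ (ne_of_gt ht), one_smul]
  set a : ℝ := inner ℝ e y with ha_def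
  have ha : |a| ≤ b := by
    calc |a| ≤ ‖e‖ * ‖y‖ := abs_real_inner_le_norm e y
      _ = b := by rw [he1, one_mul]
  -- quadratic identity
  have hquad : ∀ s : ℝ, 0 ≤ s → ‖s • e - y‖ ^ 2 = s ^ 2 - 2 * a * s + b ^ 2 := by
    intro s hs
    have := norm_sub_sq_real (s • e) y
    rw [this, norm_smul, real_inner_smul_left, he1]
    simp [abs_of_nonneg hs, ha_def, hb_def, mul_pow]
    ring
  -- members of the ball and HasSum statements
  have hmem : ∀ s : ℝ, 0 ≤ s → s < b → (s • e) ∈ ball (0 : EuclideanSpace ℝ (Fin n)) ‖y‖ := by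
    intro s hs0 hs1
    rw [mem_ball, dist_zero_right, norm_smul, he1, mul_one, Real.norm_eq_abs, abs_of_nonneg hs0]
    exact hs1
  have hkey : ∀ s : ℝ, 0 ≤ s → s < b →
      HasSum (fun k => (Γ k * P k e) * s ^ k) (c * ‖s • e - y‖ ^ ((2:ℝ) - n)) := by
    intro s hs0 hs1
    have hne : s • e ≠ y := by
      intro hcon
      have hns : ‖s • e‖ = s := by
        rw [norm_smul, he1, mul_one, Real.norm_eq_abs, abs_of_nonneg hs0]
      have hsb : s = b := by rw [hb_def, ← hcon, hns]
      exact (ne_of_lt hs1) hsb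
    have hpos : 0 < c * ‖s • e - y‖ ^ ((2:ℝ) - n) := by
      apply mul_pos hc
      apply Real.rpow_pos_of_pos
      rw [norm_pos_iff, sub_ne_zero]
      exact hne
    have heq := hexp (s • e) (hmem s hs0 hs1)
    have hterm : ∀ k, Γ k * P k (s • e) = (Γ k * P k e) * s ^ k := by
      intro k
      rw [hhom k s e hs0]
      ring
    have heq2 : c * ‖s • e - y‖ ^ ((2:ℝ) - n) = ∑' k, (Γ k * P k e) * s ^ k := by
      rw [heq]
      exact tsum_congr hterm
    have hsummable : Summable (fun k => (Γ k * P k e) * s ^ k) := by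
      by_contra hcon
      rw [tsum_eq_zero_of_not_summable hcon] at heq2
      exact (ne_of_gt hpos) heq2
    rw [heq2]
    exact hsummable.hasSum
  set aa : ℕ → ℝ := fun k => Γ k * P k e with haa_def
  -- crude bound on the coefficients, at radius b/2
  have hb2 : (0:ℝ) < b / 2 := by positivity
  have hcrude : ∃ A : ℝ, ∀ k, |aa k| ≤ A * ((b / 2)⁻¹) ^ k := by
    have hs := hkey (b / 2) hb2.le (by linarith)
    have htend := hs.summable.tendsto_atTop_zero
    have htend2 : Filter.Tendsto (fun k => |aa k * (b / 2) ^ k|) Filter.atTop (nhds 0) := by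
      have := htend.abs
      simpa [haa_def] using this
    obtain ⟨A, hA⟩ := htend2.bddAbove_range
    refine ⟨A, fun k => ?_⟩
    have h1 : |aa k * (b / 2) ^ k| ≤ A := hA ⟨k, rfl⟩
    have h2 : |aa k| * (b / 2) ^ k ≤ A := by
      rwa [abs_mul, abs_pow, abs_of_pos hb2] at h1
    have h3 : (0:ℝ) < (b / 2) ^ k := by positivity
    calc |aa k| = (|aa k| * (b / 2) ^ k) * ((b / 2)⁻¹) ^ k := by
          rw [mul_assoc, ← mul_pow, mul_inv_cancel₀ hb2.ne', one_pow, mul_one]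
      _ ≤ A * ((b / 2)⁻¹) ^ k := by
          apply mul_le_mul_of_nonneg_right h2 (by positivity)
  obtain ⟨A, hA⟩ := hcrude
  -- apply the Cauchy estimate
  have hsum' : ∀ s : ℝ, 0 < s → s < 2 * b / 3 →
      HasSum (fun k => aa k * s ^ k) (c * (s ^ 2 - 2 * a * s + b ^ 2) ^ w) := by
    intro s hs0 hs1
    have := hkey s hs0.le (by linarith)
    rwa [hrpow_eq (s • e - y), hquad s hs0.le] at this
  have hcoefb := stmt10_cauchy n hn c a b A ((b/2)⁻¹) aa hc hb ha (by positivity) hA hsum'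
    (fun d A' r' ε h1 h2 h3 h4 => stmt10_uniq d A' r' ε h1 h2 h3 h4)
  set M : ℝ := c * (b ^ 2 / 18) ^ w with hM_def
  have hM : 0 < M := mul_pos hc (Real.rpow_pos_of_pos (by positivity) _)
  -- the sum at x itself
  have hx_sum : HasSum (fun k => aa k * t ^ k) (c * ‖x - y‖ ^ ((2:ℝ) - n)) := by
    have := hkey t ht.le (by rw [ht_def]; linarith)
    rwa [← hx_eq] at this
  have hpartial : ∑ k ∈ Finset.range (d + 1), Γ k * P k x =
      ∑ k ∈ Finset.range (d + 1), aa k * t ^ k := by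
    apply Finset.sum_congr rfl
    intro k _
    rw [hx_eq, hhom k t e ht.le, haa_def]
    ring
  have htail : c * ‖x - y‖ ^ ((2:ℝ) - n) - ∑ k ∈ Finset.range (d + 1), aa k * t ^ k =
      ∑' k, aa (k + (d + 1)) * t ^ (k + (d + 1)) := by
    have := Summable.sum_add_tsum_nat_add (f := fun k => aa k * t ^ k) (d + 1) hx_sum.summable
    rw [hx_sum.tsum_eq] at this
    linarith
  -- geometric bound on the tail
  set ρ : ℝ := t * (2 * b / 3)⁻¹ with hρ_def
  have hρ0 : 0 ≤ ρ := by positivity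
  have hρ34 : ρ ≤ 3 / 4 := by
    rw [hρ_def, mul_inv_le_iff₀ (by positivity)]
    linarith
  have hρ1 : ρ < 1 := lt_of_le_of_lt hρ34 (by norm_num)
  have hgeo : HasSum (fun k : ℕ => (M * ρ ^ (d + 1)) * ρ ^ k)
      ((M * ρ ^ (d + 1)) * (1 - ρ)⁻¹) :=
    (hasSum_geometric_of_lt_one hρ0 hρ1).mul_left _
  have hterm_bound : ∀ k : ℕ, ‖aa (k + (d + 1)) * t ^ (k + (d + 1))‖ ≤
      (M * ρ ^ (d + 1)) * ρ ^ k := by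
    intro k
    rw [Real.norm_eq_abs, abs_mul, abs_pow, abs_of_pos ht]
    calc |aa (k + (d + 1))| * t ^ (k + (d + 1))
        ≤ (M * ((2 * b / 3)⁻¹) ^ (k + (d + 1))) * t ^ (k + (d + 1)) := by
          apply mul_le_mul_of_nonneg_right (hcoefb _) (by positivity)
      _ = (M * ρ ^ (d + 1)) * ρ ^ k := by
          rw [hρ_def, mul_pow, mul_pow]
          ring
  have htail_bound : ‖∑' k, aa (k + (d + 1)) * t ^ (k + (d + 1))‖ ≤
      (M * ρ ^ (d + 1)) * (1 - ρ)⁻¹ := tsum_of_norm_bounded hgeo hterm_bound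
  -- final computation
  have hinv4 : (1 - ρ)⁻¹ ≤ 4 := by
    rw [inv_le_comm₀ (by linarith) (by norm_num)]
    linarith
  have hfinal : (M * ρ ^ (d + 1)) * (1 - ρ)⁻¹ ≤ 4 * K * c * 2 ^ (d + 1) * t ^ (d + 1) *
      b ^ ((1:ℝ) - n - d) := by
    have step1 : (M * ρ ^ (d + 1)) * (1 - ρ)⁻¹ ≤ 4 * (M * ρ ^ (d + 1)) := by
      rw [mul_comm (4:ℝ)]
      apply mul_le_mul_of_nonneg_left hinv4 (by positivity)
    refine le_trans step1 ?_
    -- expand M and ρ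
    have hMK : M = c * K * b ^ ((2:ℝ) - n) := by
      rw [hM_def, hK_def]
      rw [Real.div_rpow (by positivity) (by norm_num)]
      rw [← Real.rpow_natCast b 2, ← Real.rpow_mul hb.le]
      rw [show ((2:ℕ):ℝ) * w = (2:ℝ) - n by rw [hw_def]; push_cast; ring]
      rw [show (18:ℝ) ^ w = ((18:ℝ) ^ (((n:ℝ) - 2) / 2))⁻¹ by
        rw [← Real.rpow_neg (by norm_num : (0:ℝ) ≤ 18)]
        congr 1
        rw [hw_def]; ring]
      rw [← hK_def]
      field_simp
    have hρpow : ρ ^ (d + 1) = t ^ (d + 1) * ((3:ℝ)/2) ^ (d + 1) * (b⁻¹) ^ (d + 1) := by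
      rw [hρ_def, show (2 * b / 3)⁻¹ = (3:ℝ)/2 * b⁻¹ by field_simp, mul_pow, mul_pow]
      ring
    have hbpow : b ^ ((2:ℝ) - n) * (b⁻¹) ^ (d + 1) = b ^ ((1:ℝ) - n - d) := by
      have h1 : (b⁻¹) ^ (d + 1) = b ^ (-((d:ℝ) + 1)) := by
        rw [show -((d:ℝ) + 1) = -(((d + 1 : ℕ)):ℝ) by push_cast; ring,
          Real.rpow_neg hb.le, Real.rpow_natCast, inv_pow]
      rw [h1, ← Real.rpow_add hb]
      congr 1
      ring
    have h32 : ((3:ℝ)/2) ^ (d + 1) ≤ 2 ^ (d + 1) :=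
      pow_le_pow_left₀ (by norm_num) (by norm_num) _
    calc 4 * (M * ρ ^ (d + 1))
        = 4 * c * K * (((3:ℝ)/2) ^ (d + 1)) * t ^ (d + 1) * (b ^ ((2:ℝ) - n) * (b⁻¹) ^ (d + 1)) := by
          rw [hMK, hρpow]; ring
      _ ≤ 4 * c * K * ((2:ℝ) ^ (d + 1)) * t ^ (d + 1) * (b ^ ((2:ℝ) - n) * (b⁻¹) ^ (d + 1)) := by
          apply mul_le_mul_of_nonneg_right _ (by positivity)
          apply mul_le_mul_of_nonneg_right _ (by positivity)
          apply mul_le_mul_of_nonneg_left h32 (by positivity)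
      _ = 4 * K * c * 2 ^ (d + 1) * t ^ (d + 1) * b ^ ((1:ℝ) - n - d) := by
          rw [hbpow]; ring
  rw [hpartial, htail, ← Real.norm_eq_abs]
  exact le_trans htail_bound hfinal
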